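/- For a continuous function f : [0,1] → ℝ that is nonnegative, with f(1) > 0, the quotient (∫₀¹ x^(n+1) f(x) dx)/(∫₀¹ xⁿ f(x) dx) tends to 1 as n → ∞. -/

import Mathlib

/-! With `Iₙ = ∫₀¹ xⁿ f`, the ratio `Iₙ₊₁ / Iₙ` is at most `1` because `xⁿ⁺¹ ≤ xⁿ` on `[0,1]`.
For a lower bound fix `0 < a < 1`. The pointwise inequality `xⁿ⁺¹ ≥ a xⁿ - aⁿ⁺¹` gives
`Iₙ₊₁ ≥ a Iₙ - aⁿ⁺¹ I₀`, while the positivity of `f` near `1` gives `Iₙ ≥ cⁿ ∫_c^1 f > 0` for some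
`c ∈ (a,1)`. Hence the error `aⁿ⁺¹ I₀ / Iₙ` is `O((a/c)ⁿ)`, and the ratio eventually exceeds every
`l < a`. -/

open Filter Topology Set intervalIntegral
open MeasureTheory (volume ae_restrict_of_forall_mem)

noncomputable def powerMoment (f : ℝ → ℝ) (n : ℕ) : ℝ :=
  ∫ x in (0:ℝ)..1, x ^ n * f x

lemma mul_pow_sub_pow_succ_le_pow_succ {a x : ℝ} (ha : 0 ≤ a) (hx : 0 ≤ x) (n : ℕ) :
    a * x ^ n - a ^ (n + 1) ≤ x ^ (n + 1) := by
  rcases le_total a x with hax | hxa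
  · have : a * x ^ n ≤ x ^ (n + 1) := by
      rw [pow_succ']
      exact mul_le_mul_of_nonneg_right hax (pow_nonneg hx n)
    linarith [pow_nonneg ha (n + 1)]
  · have : a * x ^ n ≤ a ^ (n + 1) := by
      rw [pow_succ']
      exact mul_le_mul_of_nonneg_left (pow_le_pow_left₀ hx hxa n) ha
    linarith [pow_nonneg hx (n + 1)]

section

variable {f : ℝ → ℝ} {a b : ℝ}

lemma IntervalIntegrable.pow_mul (hfi : IntervalIntegrable f volume a b) (n : ℕ) :
    IntervalIntegrable (fun x => x ^ n * f x) volume a b :=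
  hfi.continuousOn_mul (continuous_pow n).continuousOn

lemma powerMoment_nonneg (hf0 : ∀ x ∈ Icc (0:ℝ) 1, 0 ≤ f x) (n : ℕ) : 0 ≤ powerMoment f n :=
  integral_nonneg zero_le_one fun x hx => mul_nonneg (pow_nonneg hx.1 n) (hf0 x hx)

lemma powerMoment_succ_le (hfi : IntervalIntegrable f volume 0 1)
    (hf0 : ∀ x ∈ Icc (0:ℝ) 1, 0 ≤ f x) (n : ℕ) : powerMoment f (n + 1) ≤ powerMoment f n :=
  integral_mono_on zero_le_one (hfi.pow_mul _) (hfi.pow_mul _) fun x hx =>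
    mul_le_mul_of_nonneg_right (pow_le_pow_of_le_one hx.1 hx.2 n.le_succ) (hf0 x hx)

lemma mul_powerMoment_sub_le_powerMoment_succ (hfi : IntervalIntegrable f volume 0 1)
    (hf0 : ∀ x ∈ Icc (0:ℝ) 1, 0 ≤ f x) (ha : 0 ≤ a) (n : ℕ) :
    a * powerMoment f n - a ^ (n + 1) * ∫ x in (0:ℝ)..1, f x ≤ powerMoment f (n + 1) := by
  calc a * powerMoment f n - a ^ (n + 1) * ∫ x in (0:ℝ)..1, f x
      = ∫ x in (0:ℝ)..1, (a * x ^ n - a ^ (n + 1)) * f x := by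
        simp only [sub_mul, mul_assoc]
        rw [integral_sub ((hfi.pow_mul n).const_mul a) (hfi.const_mul _), integral_const_mul,
          integral_const_mul, powerMoment]
    _ ≤ powerMoment f (n + 1) :=
        integral_mono_on zero_le_one (hfi.continuousOn_mul (by fun_prop))
          (hfi.pow_mul _) fun x hx =>
          mul_le_mul_of_nonneg_right (mul_pow_sub_pow_succ_le_pow_succ ha hx.1 n) (hf0 x hx)

lemma pow_mul_integral_le_powerMoment (hfi : IntervalIntegrable f volume 0 1)
    (hf0 : ∀ x ∈ Icc (0:ℝ) 1, 0 ≤ f x) {t : ℝ} (ht : t ∈ Icc (0:ℝ) 1) (n : ℕ) :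
    t ^ n * ∫ x in t..1, f x ≤ powerMoment f n := by
  have hfi' : IntervalIntegrable f volume t 1 :=
    hfi.mono_set (uIcc_subset_uIcc (mem_uIcc_of_le ht.1 ht.2) right_mem_uIcc)
  calc t ^ n * ∫ x in t..1, f x = ∫ x in t..1, t ^ n * f x := (integral_const_mul _ _).symm
    _ ≤ ∫ x in t..1, x ^ n * f x :=
        integral_mono_on ht.2 (hfi'.const_mul _) (hfi'.pow_mul n) fun x hx =>
          mul_le_mul_of_nonneg_right (pow_le_pow_left₀ ht.1 hx.1 n)
            (hf0 x ⟨ht.1.trans hx.1, hx.2⟩)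
    _ ≤ powerMoment f n :=
        integral_mono_interval ht.1 ht.2 le_rfl
          (ae_restrict_of_forall_mem measurableSet_Ioc fun x hx =>
            mul_nonneg (pow_nonneg hx.1.le n) (hf0 x (Ioc_subset_Icc_self hx)))
          (hfi.pow_mul n)

theorem tendsto_powerMoment_succ_div (hfi : IntervalIntegrable f volume 0 1)
    (hf0 : ∀ x ∈ Icc (0:ℝ) 1, 0 ≤ f x)
    (hpos : ∀ᶠ t in 𝓝[<] (1:ℝ), 0 < ∫ x in t..1, f x) :
    Tendsto (fun n => powerMoment f (n + 1) / powerMoment f n) atTop (𝓝 1) := by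
  refine tendsto_order.2 ⟨fun l hl => ?_, fun u hu => .of_forall fun n =>
    (div_le_one_of_le₀ (powerMoment_succ_le hfi hf0 n) (powerMoment_nonneg hf0 n)).trans_lt hu⟩
  obtain ⟨a, hla, ha0, ha1⟩ : ∃ a, l < a ∧ 0 < a ∧ a < 1 :=
    ⟨(max l 0 + 1) / 2, by grind, by grind, by grind⟩
  obtain ⟨c, hJ, hac, hc1⟩ := (hpos.and (Ioo_mem_nhdsLT ha1)).exists
  set J := ∫ x in c..1, f x
  set M := ∫ x in (0:ℝ)..1, f x
  have hc0 : 0 < c := ha0.trans hac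
  have hsmall : Tendsto (fun n => (a / c) ^ n * (a * M)) atTop (𝓝 0) := by
    simpa using (tendsto_pow_atTop_nhds_zero_of_lt_one (by positivity)
      ((div_lt_one hc0).2 hac)).mul_const (a * M)
  filter_upwards [hsmall.eventually_lt_const (mul_pos (sub_pos.2 hla) hJ)] with n hn
  rw [div_pow, div_mul_eq_mul_div, div_lt_iff₀ (pow_pos hc0 n)] at hn
  have hlower := pow_mul_integral_le_powerMoment hfi hf0 ⟨hc0.le, hc1.le⟩ n
  have hsucc := mul_powerMoment_sub_le_powerMoment_succ hfi hf0 ha0.le n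
  rw [lt_div_iff₀ ((mul_pos (pow_pos hc0 n) hJ).trans_le hlower)]
  have := mul_le_mul_of_nonneg_left hlower (sub_pos.2 hla).le
  rw [pow_succ'] at hsucc
  linarith

lemma eventually_integral_pos_nhdsLT_one (hfi : IntervalIntegrable f volume 0 1)
    (hf : ∀ᶠ x in 𝓝[<] (1:ℝ), 0 < f x) : ∀ᶠ t in 𝓝[<] (1:ℝ), 0 < ∫ x in t..1, f x := by
  obtain ⟨l, hl1, hsub⟩ := mem_nhdsLT_iff_exists_Ioo_subset.1 (hf.and (Ioo_mem_nhdsLT one_pos))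
  filter_upwards [Ioo_mem_nhdsLT hl1] with t ht
  have ht0 : 0 < t := (hsub ht).2.1
  refine intervalIntegral_pos_of_pos_on ?_ (fun x hx => (hsub ⟨ht.1.trans hx.1, hx.2⟩).1) ht.2
  exact hfi.mono_set (uIcc_subset_uIcc (mem_uIcc_of_le ht0.le ht.2.le) right_mem_uIcc)

end

theorem continuous_prior_ratio_tendsto_one (f : ℝ → ℝ)
    (hf : ContinuousOn f (Set.Icc 0 1))
    (hf0 : ∀ x ∈ Set.Icc (0:ℝ) 1, 0 ≤ f x) (hf1 : 0 < f 1) :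
    Filter.Tendsto (fun n : ℕ =>
      (∫ x in (0:ℝ)..1, x ^ (n + 1) * f x) / (∫ x in (0:ℝ)..1, x ^ n * f x))
      Filter.atTop (nhds 1) := by
  have hfi : IntervalIntegrable f volume 0 1 := hf.intervalIntegrable_of_Icc zero_le_one
  have hpos : ∀ᶠ x in 𝓝[<] (1:ℝ), 0 < f x :=
    nhdsWithin_le_of_mem (Icc_mem_nhdsLT one_pos)
      ((hf 1 ⟨zero_le_one, le_rfl⟩).eventually (lt_mem_nhds hf1))
  exact tendsto_powerMoment_succ_div hfi hf0 (eventually_integral_pos_nhdsLT_one hfi hpos)
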